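/- Let k be a field, n ≥ 2, A = k[x]/(xⁿ), and 1 ≤ m < n. Let T₂ be the two-term cochain complex of A-modules A --·x^m--> A concentrated in degrees −1 and 0, regarded as an object of K^b(proj A), and let β : A → T₂ be the chain map from the stalk complex A in degree 0 whose degree-0 component is the identity. Then: (i) for every i ∈ ℤ, every morphism A → T₂⟦i⟧ in K^b(proj A) factors through β; and (ii) the mapping cone of β is isomorphic in K^b(proj A) to A⟦1⟧ (the stalk complex A placed in degree −1). -/

import Mathlib

/-!
For a two-term complex `T = (x : P ⟶ Q)`, the sequence `Q → T → P⟦1⟧` (inclusion in degree `0`,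
projection from degree `-1`) is split in each degree, so its triangle is distinguished in the
homotopy category; comparing it with the mapping-cone triangle of `β` identifies `Cone β` with
`P⟦1⟧`.

A morphism `A ⟶ T⟦i⟧` lifts to a chain map, i.e. a cocycle `φ ∈ (T⟦i⟧)⁰`, and extends over `β`
as soon as it extends in degree `-1`. For `i = 0`, put `φ` in degree `-1` as well: it commutes
with `x = ·xᵐ` because `A` is commutative. For `i ≠ 0`, put `0` in degree `-1`; this needs
`x φ = 0`, which for `i = -1` is the cocycle condition `φ x = 0` and otherwise holds because
`(T⟦i⟧)⁰ = 0`.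
-/

set_option linter.unusedSectionVars false

open CategoryTheory Category Limits ZeroObject

namespace ForPaper

variable {V : Type*} [Category V] [Preadditive V] [HasZeroObject V]

/-- The graded object with `P` in degree `-1`, `Q` in degree `0` and `0` elsewhere. -/
noncomputable def deg (P Q : V) (n : ℤ) : V :=
  if n = -1 then P else if n = 0 then Q else 0

lemma deg_neg_one (P Q : V) : deg P Q (-1) = P := if_pos rfl

lemma deg_zero (P Q : V) : deg P Q 0 = Q := by simp [deg]

lemma deg_eq_zero (P Q : V) (n : ℤ) (h₁ : n ≠ -1) (h₂ : n ≠ 0) : deg P Q n = 0 := by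
  simp [deg, h₁, h₂]

/-- The two-term cochain complex `P ⟶ Q` concentrated in (cohomological) degrees `-1`
and `0`. -/
noncomputable def twoTerm {P Q : V} (f : P ⟶ Q) : CochainComplex V ℤ where
  X := deg P Q
  d i j :=
    if h : i = -1 ∧ j = 0 then
      eqToHom (by rw [h.1, deg_neg_one]) ≫ f ≫ eqToHom (by rw [h.2, deg_zero])
    else 0
  shape i j hij := by
    rw [dif_neg]
    rintro ⟨rfl, rfl⟩
    exact hij (by simp)
  d_comp_d' i j l _ _ := by
    by_cases h : i = -1 ∧ j = 0
    · have h' : ¬(j = -1 ∧ l = 0) := by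
        rintro ⟨rfl, -⟩
        exact absurd h.2 (by decide)
      rw [dif_neg h', comp_zero]
    · rw [dif_neg h, zero_comp]

lemma twoTerm_X_neg_one {P Q : V} (f : P ⟶ Q) : (twoTerm f).X (-1) = P := deg_neg_one P Q

lemma twoTerm_X_zero {P Q : V} (f : P ⟶ Q) : (twoTerm f).X 0 = Q := deg_zero P Q

lemma twoTerm_d {P Q : V} (f : P ⟶ Q) :
    (twoTerm f).d (-1) 0 =
      eqToHom (twoTerm_X_neg_one f) ≫ f ≫ eqToHom (twoTerm_X_zero f).symm := by
  simp [twoTerm]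

/-- The stalk complex with `Q` in degree `0`, realized as a two-term complex. -/
noncomputable def stalk0 (Q : V) : CochainComplex V ℤ := twoTerm (0 : 0 ⟶ Q)

/-- The stalk complex with `P` in degree `-1` (i.e. `P⟦1⟧`), realized as a two-term
complex. -/
noncomputable def stalkNeg1 (P : V) : CochainComplex V ℤ := twoTerm (0 : P ⟶ 0)

lemma stalk0_X_zero (Q : V) : (stalk0 Q).X 0 = Q := deg_zero (0 : V) Q

lemma stalkNeg1_X_neg_one (P : V) : (stalkNeg1 P).X (-1) = P := deg_neg_one P (0 : V)

end ForPaper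

open ForPaper

set_option synthInstance.maxHeartbeats 1000000
set_option maxHeartbeats 1000000

universe u

/-- The quotient functor from complexes to `K(Mod A)`. -/
noncomputable abbrev Kq (A : Type u) [Ring A] :
    CochainComplex (ModuleCat.{u} A) ℤ ⥤
      HomotopyCategory (ModuleCat.{u} A) (ComplexShape.up ℤ) :=
  HomotopyCategory.quotient _ _

/-- Multiplication by `a` on `A`, as an endomorphism of `A` in `ModuleCat A`. -/
noncomputable def mulMap (A : Type u) [CommRing A] (a : A) :
    ModuleCat.of A A ⟶ ModuleCat.of A A :=
  ModuleCat.ofHom (LinearMap.toSpanSingleton A A a)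

/-- The truncated polynomial algebra `k[x]/(xⁿ)`. -/
abbrev TruncPoly (k : Type u) [Field k] (n : ℕ) : Type u :=
  Polynomial k ⧸ Ideal.span {(Polynomial.X : Polynomial k) ^ n}

/-- The class of `x` in `k[x]/(xⁿ)`. -/
noncomputable abbrev truncX (k : Type u) [Field k] (n : ℕ) : TruncPoly k n :=
  Ideal.Quotient.mk _ (Polynomial.X : Polynomial k)

namespace ForPaper

variable {V : Type*} [Category V] [Preadditive V] [HasZeroObject V]

lemma twoTerm_d_eq_zero {P Q : V} (f : P ⟶ Q) {p q : ℤ} (h : ¬(p = -1 ∧ q = 0)) :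
    (twoTerm f).d p q = 0 :=
  dif_neg h

lemma twoTerm_zero_d (P Q : V) (p q : ℤ) : (twoTerm (0 : P ⟶ Q)).d p q = 0 := by
  by_cases h : p = -1 ∧ q = 0
  · obtain ⟨rfl, rfl⟩ := h
    simp [twoTerm_d]
  · exact twoTerm_d_eq_zero _ h

lemma stalk0_d (Q : V) (p q : ℤ) : (stalk0 Q).d p q = 0 := twoTerm_zero_d _ _ p q

lemma stalkNeg1_d (P : V) (p q : ℤ) : (stalkNeg1 P).d p q = 0 := twoTerm_zero_d _ _ p q

lemma isZero_twoTerm_X {P Q : V} (f : P ⟶ Q) {p : ℤ} (h₁ : p ≠ -1) (h₂ : p ≠ 0) :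
    IsZero ((twoTerm f).X p) :=
  (isZero_zero V).of_iso (eqToIso (deg_eq_zero P Q p h₁ h₂))

lemma isZero_stalk0_X (Q : V) {p : ℤ} (hp : p ≠ 0) : IsZero ((stalk0 Q).X p) := by
  by_cases h : p = -1
  · subst h
    exact (isZero_zero V).of_iso (eqToIso (deg_neg_one (0 : V) Q))
  · exact isZero_twoTerm_X _ h hp

lemma isZero_stalkNeg1_X (P : V) {p : ℤ} (hp : p ≠ -1) : IsZero ((stalkNeg1 P).X p) := by
  by_cases h : p = 0
  · subst h
    exact (isZero_zero V).of_iso (eqToIso (deg_zero P (0 : V)))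
  · exact isZero_twoTerm_X _ hp h

lemma stalk0_hom_ext {Q : V} {K : CochainComplex V ℤ} {f g : stalk0 Q ⟶ K}
    (h : f.f 0 = g.f 0) : f = g := by
  ext p
  by_cases hp : p = 0
  · subst hp
    exact h
  · exact (isZero_stalk0_X Q hp).eq_of_src _ _

noncomputable def twoTermDesc {P Q : V} (x : P ⟶ Q) {K : CochainComplex V ℤ}
    (a : P ⟶ K.X (-1)) (b : Q ⟶ K.X 0) (w : x ≫ b = a ≫ K.d (-1) 0)
    (hb : b ≫ K.d 0 1 = 0) : twoTerm x ⟶ K where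
  f p :=
    if hp : p = -1 then eqToHom (by rw [hp, twoTerm_X_neg_one]) ≫ a ≫ eqToHom (by rw [hp])
    else if hp' : p = 0 then eqToHom (by rw [hp', twoTerm_X_zero]) ≫ b ≫ eqToHom (by rw [hp'])
    else 0
  comm' p q hpq := by
    simp only [ComplexShape.up_Rel] at hpq
    subst hpq
    by_cases hp : p = -1
    · subst hp
      simp [twoTerm_d, w]
    · by_cases hp0 : p = 0
      · subst hp0
        simp [hb]
      · rw [dif_neg hp, dif_neg hp0, zero_comp,
          twoTerm_d_eq_zero x (by rintro ⟨rfl, -⟩; exact hp rfl), zero_comp]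

section twoTermDesc

variable {P Q : V} (x : P ⟶ Q) {K : CochainComplex V ℤ} (a : P ⟶ K.X (-1)) (b : Q ⟶ K.X 0)
  (w : x ≫ b = a ≫ K.d (-1) 0) (hb : b ≫ K.d 0 1 = 0)

lemma twoTermDesc_f_neg_one :
    (twoTermDesc x a b w hb).f (-1) = eqToHom (twoTerm_X_neg_one x) ≫ a := by
  simp [twoTermDesc]

lemma twoTermDesc_f_zero :
    (twoTermDesc x a b w hb).f 0 = eqToHom (twoTerm_X_zero x) ≫ b := by
  simp [twoTermDesc]

end twoTermDesc

noncomputable def twoTermInc {P Q : V} (x : P ⟶ Q) : stalk0 Q ⟶ twoTerm x :=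
  twoTermDesc (0 : (0 : V) ⟶ Q) 0 (eqToHom (twoTerm_X_zero x).symm) (by simp)
    (by rw [twoTerm_d_eq_zero x (by decide), comp_zero])

lemma twoTermInc_f_zero {P Q : V} (x : P ⟶ Q) :
    (twoTermInc x).f 0 = eqToHom ((stalk0_X_zero Q).trans (twoTerm_X_zero x).symm) := by
  rw [twoTermInc, twoTermDesc_f_zero, eqToHom_trans]
  rfl

lemma eq_twoTermInc {P Q : V} {x : P ⟶ Q} (β : stalk0 Q ⟶ twoTerm x)
    (hβ : β.f 0 = eqToHom ((stalk0_X_zero Q).trans (twoTerm_X_zero x).symm)) :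
    β = twoTermInc x :=
  stalk0_hom_ext (by rw [hβ, twoTermInc_f_zero])

noncomputable def twoTermProj {P Q : V} (x : P ⟶ Q) : twoTerm x ⟶ stalkNeg1 P :=
  twoTermDesc x (eqToHom (stalkNeg1_X_neg_one P).symm) 0 (by simp [stalkNeg1_d]) (by simp)

lemma twoTermInc_comp_twoTermProj {P Q : V} (x : P ⟶ Q) : twoTermInc x ≫ twoTermProj x = 0 :=
  stalk0_hom_ext (by simp [twoTermProj, twoTermDesc_f_zero])

lemma isIso_twoTermProj_f {P Q : V} (x : P ⟶ Q) {p : ℤ} (hp : p ≠ 0) :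
    IsIso ((twoTermProj x).f p) := by
  by_cases h : p = -1
  · subst h
    rw [twoTermProj, twoTermDesc_f_neg_one]
    infer_instance
  · exact isIso_of_source_target_iso_zero _ (isZero_twoTerm_X x h hp).isoZero
      (isZero_stalkNeg1_X P h).isoZero

noncomputable def twoTermShortComplex {P Q : V} (x : P ⟶ Q) :
    ShortComplex (CochainComplex V ℤ) :=
  ShortComplex.mk (twoTermInc x) (twoTermProj x) (twoTermInc_comp_twoTermProj x)

noncomputable def twoTermShortComplexSplitting {P Q : V} (x : P ⟶ Q) (p : ℤ) :
    ((twoTermShortComplex x).map (HomologicalComplex.eval V _ p)).Splitting :=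
  if hp : p = 0 then
    .ofIsIsoOfIsZero _
      (by
        subst hp
        change IsIso ((twoTermInc x).f 0)
        rw [twoTermInc_f_zero]
        infer_instance)
      (isZero_stalkNeg1_X P (by omega))
  else .ofIsZeroOfIsIso _ (isZero_stalk0_X Q hp) (isIso_twoTermProj_f x hp)

open Pretriangulated in
lemma nonempty_iso_mappingCone_twoTermInc [HasBinaryBiproducts V] {P Q : V} (x : P ⟶ Q) :
    Nonempty ((HomotopyCategory.quotient V (ComplexShape.up ℤ)).obj
        (CochainComplex.mappingCone (twoTermInc x)) ≅
      (HomotopyCategory.quotient V (ComplexShape.up ℤ)).obj (stalkNeg1 P)) := by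
  have h₁ := HomotopyCategory.mappingCone_triangleh_distinguished (twoTermInc x)
  have h₂ : CochainComplex.trianglehOfDegreewiseSplit _ (twoTermShortComplexSplitting x) ∈
      distTriang (HomotopyCategory V (ComplexShape.up ℤ)) := by
    rw [HomotopyCategory.distinguished_iff_iso_trianglehOfDegreewiseSplit]
    exact ⟨_, _, ⟨Iso.refl _⟩⟩
  have e := isoTriangleOfIso₁₂ _ _ h₁ h₂ (Iso.refl _) (Iso.refl _) (by
    dsimp [twoTermShortComplex, CochainComplex.mappingCone.triangleh]
    exact (comp_id _).trans (id_comp _).symm)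
  exact ⟨Triangle.π₃.mapIso e⟩

lemma exists_twoTermInc_comp_eq {P Q : V} (x : P ⟶ Q) {K : CochainComplex V ℤ}
    (f : stalk0 Q ⟶ K) (a : P ⟶ K.X (-1))
    (w : x ≫ eqToHom (stalk0_X_zero Q).symm ≫ f.f 0 = a ≫ K.d (-1) 0) :
    ∃ v : twoTerm x ⟶ K, twoTermInc x ≫ v = f := by
  have hf : (eqToHom (stalk0_X_zero Q).symm ≫ f.f 0) ≫ K.d 0 1 = 0 := by
    rw [assoc, f.comm, stalk0_d, zero_comp, comp_zero]
  refine ⟨twoTermDesc x a _ w hf, stalk0_hom_ext ?_⟩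
  simp [twoTermInc_f_zero, twoTermDesc_f_zero]

section central

variable {Q : V} (x : Q ⟶ Q)

lemma exists_twoTermInc_comp_eq_self (hx : ∀ g : Q ⟶ Q, x ≫ g = g ≫ x)
    (f : stalk0 Q ⟶ twoTerm x) :
    ∃ v : twoTerm x ⟶ twoTerm x, twoTermInc x ≫ v = f := by
  set g : Q ⟶ Q := eqToHom (stalk0_X_zero Q).symm ≫ f.f 0 ≫ eqToHom (twoTerm_X_zero x)
  refine exists_twoTermInc_comp_eq x f (g ≫ eqToHom (twoTerm_X_neg_one x).symm) ?_
  calc x ≫ eqToHom (stalk0_X_zero Q).symm ≫ f.f 0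
      = (x ≫ g) ≫ eqToHom (twoTerm_X_zero x).symm := by simp [g]
    _ = (g ≫ x) ≫ eqToHom (twoTerm_X_zero x).symm := by rw [hx]
    _ = _ := by simp [g, twoTerm_d]

lemma exists_twoTermInc_comp_eq_shift_of_ne_zero (hx : ∀ g : Q ⟶ Q, x ≫ g = g ≫ x)
    {i : ℤ} (hi : i ≠ 0) (f : stalk0 Q ⟶ (twoTerm x)⟦i⟧) :
    ∃ v : twoTerm x ⟶ (twoTerm x)⟦i⟧, twoTermInc x ≫ v = f := by
  refine exists_twoTermInc_comp_eq x f 0 ?_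
  rw [zero_comp]
  obtain rfl | hi' := eq_or_ne i (-1)
  · let φ : Q ⟶ Q := f.f 0
    have hφ : φ ≫ ((-1 : ℤ).negOnePow • (𝟙 Q ≫ x ≫ 𝟙 Q)) = 0 := by
      have h := f.comm 0 1
      rw [stalk0_d, zero_comp] at h
      exact h
    change x ≫ 𝟙 Q ≫ φ = 0
    simpa [Linear.comp_units_smul, ← hx] using hφ
  · exact (isZero_twoTerm_X x (p := 0 + i) (by omega) (by omega)).eq_of_tgt _ _

lemma exists_twoTermInc_comp_eq_shift (hx : ∀ g : Q ⟶ Q, x ≫ g = g ≫ x) (i : ℤ)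
    (f : stalk0 Q ⟶ (twoTerm x)⟦i⟧) :
    ∃ v : twoTerm x ⟶ (twoTerm x)⟦i⟧, twoTermInc x ≫ v = f := by
  obtain rfl | hi := eq_or_ne i 0
  · let e := (shiftFunctorZero (CochainComplex V ℤ) ℤ).app (twoTerm x)
    obtain ⟨v, hv⟩ := exists_twoTermInc_comp_eq_self x hx (f ≫ e.hom)
    exact ⟨v ≫ e.inv, by rw [← assoc, hv, assoc, e.hom_inv_id, comp_id]⟩
  · exact exists_twoTermInc_comp_eq_shift_of_ne_zero x hx hi f

end central

lemma exists_eq_quotient_map_comp {X Y Z : CochainComplex V ℤ} (β : X ⟶ Y) (i : ℤ)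
    (h : ∀ f : X ⟶ Z⟦i⟧, ∃ v : Y ⟶ Z⟦i⟧, β ≫ v = f)
    (u : (HomotopyCategory.quotient V (ComplexShape.up ℤ)).obj X ⟶
      ((HomotopyCategory.quotient V (ComplexShape.up ℤ)).obj Z)⟦i⟧) :
    ∃ v : (HomotopyCategory.quotient V (ComplexShape.up ℤ)).obj Y ⟶
        ((HomotopyCategory.quotient V (ComplexShape.up ℤ)).obj Z)⟦i⟧,
      u = (HomotopyCategory.quotient V (ComplexShape.up ℤ)).map β ≫ v := by
  let F := HomotopyCategory.quotient V (ComplexShape.up ℤ)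
  let e := (F.commShiftIso i).app Z
  obtain ⟨f, hf⟩ := F.map_surjective (u ≫ e.inv)
  obtain ⟨v, rfl⟩ := h f
  refine ⟨F.map v ≫ e.hom, ?_⟩
  rw [← assoc, ← F.map_comp, hf, assoc, e.inv_hom_id]
  exact (comp_id u).symm

end ForPaper

lemma mulMap_comp_comm (A : Type u) [CommRing A] (a : A)
    (g : ModuleCat.of A A ⟶ ModuleCat.of A A) :
    mulMap A a ≫ g = g ≫ mulMap A a := by
  ext
  simp [mulMap]

theorem statement_14_general (k : Type u) [Field k] (n m : ℕ)
    (β : stalk0 (ModuleCat.of (TruncPoly k n) (TruncPoly k n)) ⟶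
      twoTerm (mulMap (TruncPoly k n) (truncX k n ^ m)))
    (hβ : β.f 0 = eqToHom
      ((stalk0_X_zero (ModuleCat.of (TruncPoly k n) (TruncPoly k n))).trans
        (twoTerm_X_zero (mulMap (TruncPoly k n) (truncX k n ^ m))).symm)) :
    (∀ (i : ℤ) (u : (Kq (TruncPoly k n)).obj
        (stalk0 (ModuleCat.of (TruncPoly k n) (TruncPoly k n))) ⟶
        ((Kq (TruncPoly k n)).obj (twoTerm (mulMap (TruncPoly k n) (truncX k n ^ m))))⟦i⟧),
      ∃ v : (Kq (TruncPoly k n)).obj (twoTerm (mulMap (TruncPoly k n) (truncX k n ^ m))) ⟶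
        ((Kq (TruncPoly k n)).obj (twoTerm (mulMap (TruncPoly k n) (truncX k n ^ m))))⟦i⟧,
        u = (Kq (TruncPoly k n)).map β ≫ v) ∧
    Nonempty ((Kq (TruncPoly k n)).obj (CochainComplex.mappingCone β) ≅
      (Kq (TruncPoly k n)).obj
        (stalkNeg1 (ModuleCat.of (TruncPoly k n) (TruncPoly k n)))) := by
  obtain rfl := eq_twoTermInc β hβ
  have hx := mulMap_comp_comm (TruncPoly k n) (truncX k n ^ m)
  exact ⟨fun i => exists_eq_quotient_map_comp _ i (exists_twoTermInc_comp_eq_shift _ hx i),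
    nonempty_iso_mappingCone_twoTermInc _⟩

/-- For `A = k[x]/(xⁿ)` and `T₂ = (A ⟶[·xᵐ] A)` in degrees `-1`, `0`: every morphism
`A ⟶ T₂⟦i⟧` in `K^b(proj A)` factors through the chain map `β : A ⟶ T₂` whose degree-`0`
component is the identity, and the mapping cone of `β` is isomorphic to `A⟦1⟧`
(the stalk complex `A` placed in degree `-1`). -/
theorem statement_14 (k : Type u) [Field k] (n m : ℕ) (hn : 2 ≤ n) (hm : 1 ≤ m)
    (hmn : m < n)
    (β : stalk0 (ModuleCat.of (TruncPoly k n) (TruncPoly k n)) ⟶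
      twoTerm (mulMap (TruncPoly k n) (truncX k n ^ m)))
    (hβ : β.f 0 = eqToHom
      ((stalk0_X_zero (ModuleCat.of (TruncPoly k n) (TruncPoly k n))).trans
        (twoTerm_X_zero (mulMap (TruncPoly k n) (truncX k n ^ m))).symm)) :
    (∀ (i : ℤ) (u : (Kq (TruncPoly k n)).obj
        (stalk0 (ModuleCat.of (TruncPoly k n) (TruncPoly k n))) ⟶
        ((Kq (TruncPoly k n)).obj (twoTerm (mulMap (TruncPoly k n) (truncX k n ^ m))))⟦i⟧),
      ∃ v : (Kq (TruncPoly k n)).obj (twoTerm (mulMap (TruncPoly k n) (truncX k n ^ m))) ⟶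
        ((Kq (TruncPoly k n)).obj (twoTerm (mulMap (TruncPoly k n) (truncX k n ^ m))))⟦i⟧,
        u = (Kq (TruncPoly k n)).map β ≫ v) ∧
    Nonempty ((Kq (TruncPoly k n)).obj (CochainComplex.mappingCone β) ≅
      (Kq (TruncPoly k n)).obj
        (stalkNeg1 (ModuleCat.of (TruncPoly k n) (TruncPoly k n)))) :=
  statement_14_general k n m β hβ
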